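/- arXiv:1912.10831 — 4 statements merged into one kernel-verified Lean document; each statement's English description precedes it below -/
import Mathlib

section
/- Let f : ℂ → ℂ be holomorphic and bounded on the strip S_β = {z : 0 ≤ Im z ≤ β} with β > 0, and let b ∈ (0, β). With w(z) = exp(-z² - b²), one has 2πi·f(ib) = ∫_{-∞}^{∞} f(t)w(t)/(t - ib) dt − ∫_{-∞}^{∞} f(t + iβ)w(t + iβ)/(t + iβ − ib) dt. -/
/-!
Put `G = f * w`; on the strip `‖G z‖ ≤ K e^{β²} e^{-(Re z)²}`. On each rectangle
`[-T, T] × [0, β]` the Cauchy integral formula gives `2πi G(ib) = ∮ G(ζ) / (ζ - ib) dζ`: apply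
Cauchy–Goursat to the difference quotient `(G ζ - G(ib)) / (ζ - ib)`, which is holomorphic off
`ib` and continuous at `ib`, and compute `∮ (ζ - ib)⁻¹ dζ = 2πi` edge by edge with logarithms.
The Gaussian decay kills the vertical sides as `T → ∞`, the horizontal sides converge to the two
line integrals, and `w(ib) = 1`.
-/

open MeasureTheory Real Complex Set Filter Topology intervalIntegral
open scoped Interval

variable {E : Type*} [NormedAddCommGroup E] [NormedSpace ℂ E]

/-- The boundary integral in Mathlib's Cauchy–Goursat theorem
`integral_boundary_rect_eq_zero_of_differentiable_on_off_countable`, over the rectangle with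
opposite corners `z` and `w`. -/
noncomputable def rectIntegral (f : ℂ → E) (z w : ℂ) : E :=
  (∫ x : ℝ in z.re..w.re, f (x + z.im * I)) - (∫ x : ℝ in z.re..w.re, f (x + w.im * I)) +
    I • (∫ y : ℝ in z.im..w.im, f (w.re + y * I)) - I • ∫ y : ℝ in z.im..w.im, f (z.re + y * I)

def rectBoundary (z w : ℂ) : Set ℂ :=
  [[z.re, w.re]] ×ℂ {z.im, w.im} ∪ {z.re, w.re} ×ℂ [[z.im, w.im]]

lemma notMem_rectBoundary {z w p : ℂ} (hre : p.re ∈ Ioo z.re w.re) (him : p.im ∈ Ioo z.im w.im) :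
    p ∉ rectBoundary z w := by
  rintro (⟨-, hp⟩ | ⟨hp, -⟩) <;>
    rcases hp with hp | hp <;> simp only [hp, mem_Ioo, lt_self_iff_false] at hre him <;> grind

lemma rectBoundary_subset_reProdIm (z w : ℂ) :
    rectBoundary z w ⊆ [[z.re, w.re]] ×ℂ [[z.im, w.im]] := by
  rintro ζ (⟨h₁, h₂ | h₂⟩ | ⟨h₁ | h₁, h₂⟩) <;> simp_all [mem_reProdIm]

lemma edges_mem_rectBoundary (z w : ℂ) :
    (∀ x ∈ [[z.re, w.re]], (x + z.im * I : ℂ) ∈ rectBoundary z w) ∧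
    (∀ x ∈ [[z.re, w.re]], (x + w.im * I : ℂ) ∈ rectBoundary z w) ∧
    (∀ y ∈ [[z.im, w.im]], (w.re + y * I : ℂ) ∈ rectBoundary z w) ∧
    (∀ y ∈ [[z.im, w.im]], (z.re + y * I : ℂ) ∈ rectBoundary z w) := by
  refine ⟨?_, ?_, ?_, ?_⟩ <;> intro t ht
  exacts [.inl (by simpa [mem_reProdIm]), .inl (by simpa [mem_reProdIm]),
    .inr (by simpa [mem_reProdIm]), .inr (by simpa [mem_reProdIm])]

lemma rectIntegral_congr {f g : ℂ → E} {z w : ℂ} (h : EqOn f g (rectBoundary z w)) :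
    rectIntegral f z w = rectIntegral g z w := by
  obtain ⟨h₁, h₂, h₃, h₄⟩ := edges_mem_rectBoundary z w
  simp only [rectIntegral, integral_congr fun t ht => h (h₁ t ht),
    integral_congr fun t ht => h (h₂ t ht), integral_congr fun t ht => h (h₃ t ht),
    integral_congr fun t ht => h (h₄ t ht)]

lemma rectIntegral_add {f g : ℂ → E} {z w : ℂ} (hf : ContinuousOn f (rectBoundary z w))
    (hg : ContinuousOn g (rectBoundary z w)) :
    rectIntegral (fun ζ => f ζ + g ζ) z w = rectIntegral f z w + rectIntegral g z w := by
  obtain ⟨h₁, h₂, h₃, h₄⟩ := edges_mem_rectBoundary z w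
  have edge {F : ℂ → E} (hF : ContinuousOn F (rectBoundary z w)) {γ : ℝ → ℂ} (hγ : Continuous γ)
      {a b : ℝ} (hγab : ∀ t ∈ [[a, b]], γ t ∈ rectBoundary z w) :
      IntervalIntegrable (fun t => F (γ t)) volume a b :=
    (hF.comp hγ.continuousOn hγab).intervalIntegrable
  simp only [rectIntegral]
  rw [integral_add (edge hf (by fun_prop) h₁) (edge hg (by fun_prop) h₁),
    integral_add (edge hf (by fun_prop) h₂) (edge hg (by fun_prop) h₂),
    integral_add (edge hf (by fun_prop) h₃) (edge hg (by fun_prop) h₃),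
    integral_add (edge hf (by fun_prop) h₄) (edge hg (by fun_prop) h₄)]
  simp only [smul_add]
  abel

lemma rectIntegral_smul_const [CompleteSpace E] (f : ℂ → ℂ) (v : E) (z w : ℂ) :
    rectIntegral (fun ζ => f ζ • v) z w = rectIntegral f z w • v := by
  simp only [rectIntegral, intervalIntegral.integral_smul_const, sub_smul, add_smul, smul_assoc]

lemma integral_inv_mul_eq_log_sub {q v : ℂ} {a b : ℝ}
    (h : ∀ x ∈ [[a, b]], q + x * v ∈ slitPlane) :
    ∫ x in a..b, (q + x * v)⁻¹ * v = log (q + b * v) - log (q + a * v) := by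
  refine integral_eq_sub_of_hasDerivAt (f := fun x : ℝ => log (q + x * v)) (fun x hx => ?_) ?_
  · have hline : HasDerivAt (fun t : ℂ => q + t * v) v x := by
      simpa using ((hasDerivAt_id (x : ℂ)).mul_const v).const_add q
    exact ((hasDerivAt_log (h x hx)).comp (x : ℂ) hline).comp_ofReal
  · exact (ContinuousOn.inv₀ (by fun_prop) fun x hx => slitPlane_ne_zero (h x hx)).mul
      continuousOn_const |>.intervalIntegrable

lemma log_sub_log_neg_of_im_pos {z : ℂ} (h : 0 < z.im) : log z - log (-z) = π * I := by
  apply Complex.ext <;> simp [log_re, log_im, arg_neg_eq_arg_sub_pi_of_im_pos h]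

lemma log_neg_sub_log_of_im_neg {z : ℂ} (h : z.im < 0) : log (-z) - log z = π * I := by
  apply Complex.ext <;> simp [log_re, log_im, arg_neg_eq_arg_add_pi_of_im_neg h]

lemma rectIntegral_inv_sub {z w p : ℂ} (hre : p.re ∈ Ioo z.re w.re) (him : p.im ∈ Ioo z.im w.im) :
    rectIntegral (fun ζ => (ζ - p)⁻¹) z w = 2 * π * I := by
  obtain ⟨hre₁, hre₂⟩ := hre
  obtain ⟨him₁, him₂⟩ := him
  have bottom : ∫ x in z.re..w.re, ((x : ℂ) + z.im * I - p)⁻¹ =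
      log (w.re + z.im * I - p) - log (z.re + z.im * I - p) := by
    rw [integral_congr (g := fun x : ℝ => (z.im * I - p + x * 1)⁻¹ * 1) fun x _ => by ring,
      integral_inv_mul_eq_log_sub fun x _ => mem_slitPlane_iff.2 (.inr (by simp; linarith))]
    congr 2 <;> ring
  have top : ∫ x in z.re..w.re, ((x : ℂ) + w.im * I - p)⁻¹ =
      log (w.re + w.im * I - p) - log (z.re + w.im * I - p) := by
    rw [integral_congr (g := fun x : ℝ => (w.im * I - p + x * 1)⁻¹ * 1) fun x _ => by ring,
      integral_inv_mul_eq_log_sub fun x _ => mem_slitPlane_iff.2 (.inr (by simp; linarith))]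
    congr 2 <;> ring
  have right : I * ∫ y in z.im..w.im, ((w.re : ℂ) + y * I - p)⁻¹ =
      log (w.re + w.im * I - p) - log (w.re + z.im * I - p) := by
    rw [← intervalIntegral.integral_const_mul,
      integral_congr (g := fun y : ℝ => (w.re - p + y * I)⁻¹ * I) fun y _ => by ring,
      integral_inv_mul_eq_log_sub fun y _ => mem_slitPlane_iff.2 (.inl (by simp; linarith))]
    congr 2 <;> ring
  -- On the left edge `ζ - p` crosses the branch cut, so `log (-(ζ - p))` is the primitive there;
  -- the two branches differ by `πi` at each left corner.
  have left : I * ∫ y in z.im..w.im, ((z.re : ℂ) + y * I - p)⁻¹ =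
      log (-(z.re + w.im * I - p)) - log (-(z.re + z.im * I - p)) := by
    rw [← intervalIntegral.integral_const_mul,
      integral_congr (g := fun y : ℝ => (p - z.re + y * -I)⁻¹ * -I) fun y _ => by
        beta_reduce
        rw [show p - z.re + y * -I = -((z.re : ℂ) + y * I - p) by ring, inv_neg]; ring,
      integral_inv_mul_eq_log_sub fun y _ => mem_slitPlane_iff.2 (.inl (by simp; linarith))]
    congr 2 <;> ring
  have northwest := log_sub_log_neg_of_im_pos (z := z.re + w.im * I - p) (by simp; linarith)
  have southwest := log_neg_sub_log_of_im_neg (z := z.re + z.im * I - p) (by simp; linarith)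
  simp only [rectIntegral, smul_eq_mul, bottom, top, right, left]
  linear_combination northwest + southwest

theorem rectIntegral_inv_sub_smul [CompleteSpace E] {g : ℂ → E} {z w p : ℂ}
    (hre : p.re ∈ Ioo z.re w.re) (him : p.im ∈ Ioo z.im w.im)
    (hc : ContinuousOn g (Icc z.re w.re ×ℂ Icc z.im w.im))
    (hd : DifferentiableOn ℂ g (Ioo z.re w.re ×ℂ Ioo z.im w.im)) :
    rectIntegral (fun ζ => (ζ - p)⁻¹ • g ζ) z w = (2 * π * I) • g p := by
  have hre_le : z.re ≤ w.re := (hre.1.trans hre.2).le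
  have him_le : z.im ≤ w.im := (him.1.trans him.2).le
  have hopen : IsOpen (Ioo z.re w.re ×ℂ Ioo z.im w.im) := isOpen_Ioo.reProdIm isOpen_Ioo
  have hp : p ∉ rectBoundary z w := notMem_rectBoundary hre him
  have hslope_cont : ContinuousOn (dslope g p) ([[z.re, w.re]] ×ℂ [[z.im, w.im]]) := by
    rw [uIcc_of_le hre_le, uIcc_of_le him_le]
    intro ζ hζ
    rcases eq_or_ne ζ p with rfl | hne
    · exact (continuousAt_dslope_same.2 (hd.differentiableAt
        (hopen.mem_nhds ⟨hre, him⟩))).continuousWithinAt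
    · exact (continuousWithinAt_dslope_of_ne hne).2 (hc ζ hζ)
  have hslope_zero : rectIntegral (dslope g p) z w = 0 := by
    refine integral_boundary_rect_eq_zero_of_differentiable_on_off_countable _ z w {p}
      (countable_singleton p) hslope_cont fun ζ hζ => ?_
    rw [min_eq_left hre_le, max_eq_right hre_le, min_eq_left him_le, max_eq_right him_le] at hζ
    exact (differentiableAt_dslope_of_ne hζ.2).2 (hd.differentiableAt (hopen.mem_nhds hζ.1))
  have hkernel_cont : ContinuousOn (fun ζ => (ζ - p)⁻¹ • g p) (rectBoundary z w) :=
    ((continuousOn_id.sub continuousOn_const).inv₀ fun ζ hζ =>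
      sub_ne_zero.2 (ne_of_mem_of_not_mem hζ hp)).smul continuousOn_const
  calc rectIntegral (fun ζ => (ζ - p)⁻¹ • g ζ) z w
      = rectIntegral (fun ζ => dslope g p ζ + (ζ - p)⁻¹ • g p) z w := by
        refine rectIntegral_congr fun ζ hζ => ?_
        rw [dslope_of_ne _ (ne_of_mem_of_not_mem hζ hp), slope_def_module, smul_sub,
          sub_add_cancel]
    _ = rectIntegral (dslope g p) z w + rectIntegral (fun ζ => (ζ - p)⁻¹) z w • g p := by
        rw [rectIntegral_add (hslope_cont.mono (rectBoundary_subset_reProdIm z w)) hkernel_cont,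
          rectIntegral_smul_const]
    _ = (2 * π * I) • g p := by rw [hslope_zero, rectIntegral_inv_sub hre him, zero_add]

theorem integral_sub_integral_add_I_mul_eq_of_rectIntegral [CompleteSpace E] {F : ℂ → E}
    {β : ℝ} {c : E} (hrect : ∀ᶠ T : ℝ in atTop, rectIntegral F (-T) (T + β * I) = c)
    (hbot : Integrable fun t : ℝ => F t) (htop : Integrable fun t : ℝ => F (t + I * β))
    {g : ℝ → ℝ} (hg : Tendsto g (cocompact ℝ) (𝓝 0))
    (hFg : ∀ᶠ x : ℝ in cocompact ℝ, ∀ y ∈ [[0, β]], ‖F (x + y * I)‖ ≤ g x) :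
    (∫ t : ℝ, F t) - ∫ t : ℝ, F (t + I * β) = c := by
  set V : ℝ → E := fun x => ∫ y in (0 : ℝ)..β, F (x + y * I)
  have hV : Tendsto V (cocompact ℝ) (𝓝 0) := by
    refine squeeze_zero_norm' ?_ (by simpa using hg.mul_const |β|)
    filter_upwards [hFg] with x hx
    simpa using norm_integral_le_of_norm_le_const fun y hy => hx y (uIoc_subset_uIcc hy)
  rw [cocompact_eq_atBot_atTop, tendsto_sup] at hV
  have hlim : Tendsto (fun T : ℝ => rectIntegral F (-T) (T + β * I)) atTop
      (𝓝 ((∫ t : ℝ, F t) - (∫ t : ℝ, F (t + I * β)) + I • 0 - I • 0)) := by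
    refine (((intervalIntegral_tendsto_integral hbot tendsto_neg_atTop_atBot tendsto_id).sub
      (intervalIntegral_tendsto_integral htop tendsto_neg_atTop_atBot tendsto_id)).add
      (hV.2.const_smul I)).sub ((hV.1.comp tendsto_neg_atTop_atBot).const_smul I) |>.congr
      fun T => ?_
    simp [rectIntegral, V, mul_comm]
  simpa using tendsto_nhds_unique hlim (tendsto_const_nhds.congr' (hrect.mono fun T h => h.symm))

theorem two_pi_I_smul_eq_integral_sub_integral_of_strip [CompleteSpace E] {G : ℂ → E} {β : ℝ}
    {p : ℂ} (hp : p.im ∈ Ioo 0 β) (hc : ContinuousOn G (im ⁻¹' Icc 0 β))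
    (hd : DifferentiableOn ℂ G (im ⁻¹' Ioo 0 β)) {g : ℝ → ℝ} (hg_int : Integrable g)
    (hg_lim : Tendsto g (cocompact ℝ) (𝓝 0)) (hG : ∀ z ∈ im ⁻¹' Icc 0 β, ‖G z‖ ≤ g z.re) :
    (2 * π * I) • G p =
      (∫ t : ℝ, (t - p)⁻¹ • G t) - ∫ t : ℝ, (t + I * β - p)⁻¹ • G (t + I * β) := by
  have hβ : 0 ≤ β := (hp.1.trans hp.2).le
  set F : ℂ → E := fun ζ => (ζ - p)⁻¹ • G ζ
  have hF_bound : ∀ z ∈ im ⁻¹' Icc 0 β, ∀ d > 0, d ≤ ‖z - p‖ → ‖F z‖ ≤ g z.re / d := by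
    intro z hz d hd hdz
    rw [norm_smul, norm_inv, inv_mul_eq_div]
    exact div_le_div₀ ((norm_nonneg _).trans (hG z hz)) (hG z hz) hd hdz
  have hline : ∀ y ∈ Icc 0 β, y ≠ p.im → Integrable fun t : ℝ => F (t + I * y) := by
    intro y hy hyp
    have hdist : 0 < |y - p.im| := abs_pos.2 (sub_ne_zero.2 hyp)
    have him_line : ∀ t : ℝ, (t + I * y - p : ℂ).im = y - p.im := fun t => by simp
    have hne : ∀ t : ℝ, (t + I * y - p : ℂ) ≠ 0 := fun t h => hdist.ne' (by simp [← him_line t, h])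
    refine (hg_int.div_const |y - p.im|).mono' ?_ (ae_of_all _ fun t => ?_)
    · exact (((by fun_prop : Continuous fun t : ℝ => (t + I * y - p : ℂ)).inv₀ hne).smul
        (hc.comp_continuous (by fun_prop) fun t => by simpa using hy)).aestronglyMeasurable
    · simpa using hF_bound (t + I * y) (by simpa using hy) _ hdist
        ((abs_im_le_norm _).trans_eq' (by rw [him_line]))
  have hrect : ∀ᶠ T : ℝ in atTop, rectIntegral F (-T) (T + β * I) = (2 * π * I) • G p := by
    filter_upwards [eventually_gt_atTop |p.re|] with T hT
    refine rectIntegral_inv_sub_smul (by simpa [abs_lt] using hT) (by simpa using hp)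
      (hc.mono fun ζ hζ => by simpa using hζ.2) (hd.mono fun ζ hζ => by simpa using hζ.2)
  have hvert : ∀ᶠ x : ℝ in cocompact ℝ, ∀ y ∈ [[0, β]], ‖F (x + y * I)‖ ≤ g x := by
    filter_upwards [(isCompact_closedBall p.re 1).compl_mem_cocompact] with x hx y hy
    rw [uIcc_of_le hβ] at hy
    have hx' : 1 ≤ |x - p.re| := by
      simp only [mem_compl_iff, Metric.mem_closedBall, Real.dist_eq, not_le] at hx
      exact hx.le
    simpa using hF_bound (x + y * I) (by simpa using hy) 1 one_pos
      (hx'.trans ((abs_re_le_norm _).trans_eq' (by simp)))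
  exact (integral_sub_integral_add_I_mul_eq_of_rectIntegral hrect
    (by simpa using hline 0 ⟨le_rfl, hβ⟩ hp.1.ne)
    (hline β ⟨hβ, le_rfl⟩ hp.2.ne') hg_lim hvert).symm

lemma norm_cexp_neg_sq_sub_sq_le {z : ℂ} {β : ℝ} (c : ℝ) (hz : |z.im| ≤ β) :
    ‖cexp (-z ^ 2 - (c : ℂ) ^ 2)‖ ≤ rexp (β ^ 2) * rexp (-z.re ^ 2) := by
  rw [norm_exp, ← Real.exp_add, Real.exp_le_exp]
  have : z.im ^ 2 ≤ β ^ 2 := sq_le_sq' (abs_le.1 hz).1 (abs_le.1 hz).2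
  simp only [sub_re, neg_re, sq, mul_re, ofReal_re, ofReal_im, mul_zero, sub_zero]
  nlinarith [sq_nonneg c]

theorem stmt_1_general (β b : ℝ) (hb : b ∈ Set.Ioo 0 β)
    (f : ℂ → ℂ)
    (hf_cont : ContinuousOn f {z : ℂ | 0 ≤ z.im ∧ z.im ≤ β})
    (hf_diff : DifferentiableOn ℂ f {z : ℂ | 0 < z.im ∧ z.im < β})
    (hf_bdd : ∃ K : ℝ, ∀ z : ℂ, 0 ≤ z.im → z.im ≤ β → ‖f z‖ ≤ K)
    (w : ℂ → ℂ) (hw : ∀ z : ℂ, w z = Complex.exp (-z ^ 2 - (b : ℂ) ^ 2)) :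
    2 * Real.pi * Complex.I * f (Complex.I * b) =
      (∫ t : ℝ, f t * w t / (t - Complex.I * b)) -
        ∫ t : ℝ, f (t + Complex.I * β) * w (t + Complex.I * β) /
          (t + Complex.I * β - Complex.I * b) := by
  obtain ⟨K, hK⟩ := hf_bdd
  obtain rfl : w = fun z => cexp (-z ^ 2 - (b : ℂ) ^ 2) := funext hw
  have hw_one : cexp (-(I * b) ^ 2 - (b : ℂ) ^ 2) = 1 := by
    rw [mul_pow, I_sq, neg_one_mul, neg_neg, sub_self, Complex.exp_zero]
  have hgauss : Tendsto (fun x : ℝ => K * rexp (β ^ 2) * rexp (-x ^ 2)) (cocompact ℝ) (𝓝 0) := by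
    simpa using (tendsto_rpow_abs_mul_exp_neg_mul_sq_cocompact one_pos 0).const_mul
      (K * rexp (β ^ 2))
  have key := two_pi_I_smul_eq_integral_sub_integral_of_strip
    (G := fun z => f z * cexp (-z ^ 2 - (b : ℂ) ^ 2)) (p := I * b) (by simpa using hb)
    (hf_cont.mul (by fun_prop)) (hf_diff.mul (by fun_prop))
    (by simpa using (integrable_exp_neg_mul_sq one_pos).const_mul (K * rexp (β ^ 2))) hgauss
    fun z ⟨hz₀, hzβ⟩ => by
      rw [norm_mul, mul_assoc]
      exact mul_le_mul (hK z hz₀ hzβ)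
        (norm_cexp_neg_sq_sub_sq_le b (abs_le.2 ⟨by linarith, hzβ⟩))
        (norm_nonneg _) ((norm_nonneg _).trans (hK z hz₀ hzβ))
  simpa [hw_one, div_eq_inv_mul] using key

/-- contour-integral representation of `f (i b)` for `f` holomorphic and
bounded on the strip `{z : 0 ≤ Im z ≤ β}`, with weight `w z = exp (-z² - b²)`. -/
theorem stmt_1 (β b : ℝ) (hβ : 0 < β) (hb : b ∈ Set.Ioo 0 β)
    (f : ℂ → ℂ)
    (hf_cont : ContinuousOn f {z : ℂ | 0 ≤ z.im ∧ z.im ≤ β})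
    (hf_diff : DifferentiableOn ℂ f {z : ℂ | 0 < z.im ∧ z.im < β})
    (hf_bdd : ∃ K : ℝ, ∀ z : ℂ, 0 ≤ z.im → z.im ≤ β → ‖f z‖ ≤ K)
    (w : ℂ → ℂ) (hw : ∀ z : ℂ, w z = Complex.exp (-z ^ 2 - (b : ℂ) ^ 2)) :
    2 * Real.pi * Complex.I * f (Complex.I * b) =
      (∫ t : ℝ, f t * w t / (t - Complex.I * b)) -
        ∫ t : ℝ, f (t + Complex.I * β) * w (t + Complex.I * β) /
          (t + Complex.I * β - Complex.I * b) :=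
  stmt_1_general β b hb f hf_cont hf_diff hf_bdd w hw
end

section
/- For β > 0 and b ∈ (0, β), with w(z) = exp(-z² - b²), the identity (1/(2πi)) ∫_{-∞}^{∞} [w(t)·iβ + (w(t) − w(t + iβ))·(t − ib)] / [(t − ib)(t + iβ − ib)] dt = 1 holds. -/
/-!
Put `g z = w z / (z - i b)`. The integrand is `g t - g (t + iβ)`, and
`g = dslope w (ib) + w (ib) / (z - ib)`. The first summand is entire and decays like `1/|Re z|`
on the strip `0 ≤ Im z ≤ β`, where `w` is bounded, so by Cauchy's theorem on rectangles
`[-R, R] × [0, β]` its integrals along the two horizontal lines agree. The second summand is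
explicit: `(t - ib)⁻¹ - (t + i(β - b))⁻¹` has odd real part and imaginary part a sum of two
Cauchy densities, each integrating to `π`. Hence the integral is `2πi · w (ib) = 2πi`.
-/

open MeasureTheory Complex Filter Set Topology
open scoped Real

theorem inv_sq_add_sq_eq {c : ℝ} (hc : c ≠ 0) (t : ℝ) :
    (c ^ 2 + t ^ 2)⁻¹ = (c ^ 2)⁻¹ * (1 + (t / c) ^ 2)⁻¹ := by
  field_simp

theorem integrable_inv_sq_add_sq {c : ℝ} (hc : c ≠ 0) :
    Integrable fun t : ℝ => (c ^ 2 + t ^ 2)⁻¹ := by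
  simp_rw [inv_sq_add_sq_eq hc]
  exact (integrable_inv_one_add_sq.comp_div hc).const_mul _

theorem integral_univ_div_sq_add_sq {c : ℝ} (hc : 0 < c) :
    ∫ t : ℝ, c / (c ^ 2 + t ^ 2) = π := by
  simp_rw [div_eq_mul_inv c, inv_sq_add_sq_eq hc.ne', integral_const_mul,
    Measure.integral_comp_div (fun s : ℝ => (1 + s ^ 2)⁻¹), integral_univ_inv_one_add_sq,
    abs_of_pos hc, smul_eq_mul]
  field_simp

theorem ofReal_sub_ne_zero {z : ℂ} (hz : z.im ≠ 0) (t : ℝ) : (t : ℂ) - z ≠ 0 := by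
  intro h
  exact hz (by simpa using congrArg im h)

theorem integrable_norm_ofReal_sub_inv_sq {z : ℂ} (hz : z.im ≠ 0) :
    Integrable fun t : ℝ => ‖(t : ℂ) - z‖⁻¹ ^ 2 := by
  refine ((integrable_inv_sq_add_sq hz).comp_sub_right z.re).congr (.of_forall fun t => ?_)
  simp only [inv_pow, ← normSq_eq_norm_sq, normSq_apply]
  simp [sq, add_comm]

theorem integrable_ofReal_sub_inv_sub_inv {z w : ℂ} (hz : z.im ≠ 0) (hw : w.im ≠ 0) :
    Integrable fun t : ℝ => ((t : ℂ) - z)⁻¹ - ((t : ℂ) - w)⁻¹ := by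
  refine (((integrable_norm_ofReal_sub_inv_sq hz).add
    (integrable_norm_ofReal_sub_inv_sq hw)).const_mul (‖z - w‖ / 2)).mono' (by fun_prop)
    (.of_forall fun t => ?_)
  rw [inv_sub_inv' (ofReal_sub_ne_zero hz t) (ofReal_sub_ne_zero hw t),
    sub_sub_sub_cancel_left, norm_mul, norm_mul, norm_inv, norm_inv, Pi.add_apply]
  nlinarith [two_mul_le_add_sq ‖(t : ℂ) - z‖⁻¹ ‖(t : ℂ) - w‖⁻¹, norm_nonneg (z - w)]

theorem MeasureTheory.Integrable.div_ofReal_sub {f : ℝ → ℂ} (hf : Integrable f) {z : ℂ}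
    (hz : z.im ≠ 0) : Integrable fun t : ℝ => f t / ((t : ℂ) - z) := by
  simp_rw [div_eq_mul_inv]
  refine hf.mul_bdd (c := |z.im|⁻¹) (by fun_prop) (.of_forall fun t => ?_)
  rw [norm_inv]
  refine inv_anti₀ (abs_pos.2 hz) ?_
  simpa using abs_im_le_norm ((t : ℂ) - z)

theorem integral_ofReal_sub_mul_I_inv_sub_inv {a b : ℝ} (ha : 0 < a) (hb : 0 < b) :
    ∫ t : ℝ, (((t : ℂ) - b * I)⁻¹ - ((t : ℂ) + a * I)⁻¹) = 2 * π * I := by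
  have hint : Integrable fun t : ℝ => ((t : ℂ) - b * I)⁻¹ - ((t : ℂ) + a * I)⁻¹ := by
    simpa using integrable_ofReal_sub_inv_sub_inv (z := b * I) (w := -(a * I))
      (by simpa using hb.ne') (by simpa using ha.ne')
  have hre (t : ℝ) : (((t : ℂ) - b * I)⁻¹ - ((t : ℂ) + a * I)⁻¹).re
      = t / (b ^ 2 + t ^ 2) - t / (a ^ 2 + t ^ 2) := by
    simp [inv_re, normSq_apply]
    ring
  have him (t : ℝ) : (((t : ℂ) - b * I)⁻¹ - ((t : ℂ) + a * I)⁻¹).im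
      = b / (b ^ 2 + t ^ 2) + a / (a ^ 2 + t ^ 2) := by
    simp [inv_im, normSq_apply]
    ring
  have hodd : ∫ t : ℝ, (t / (b ^ 2 + t ^ 2) - t / (a ^ 2 + t ^ 2)) = 0 := by
    set u := fun t : ℝ => t / (b ^ 2 + t ^ 2) - t / (a ^ 2 + t ^ 2)
    have hu (t : ℝ) : u (-t) = -u t := by simp only [u, neg_sq]; ring
    have h := integral_neg_eq_self u volume
    simp only [hu, integral_neg] at h
    linarith
  have hcauchy {c : ℝ} (hc : c ≠ 0) : Integrable fun t : ℝ => c / (c ^ 2 + t ^ 2) := by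
    simpa only [div_eq_mul_inv] using (integrable_inv_sq_add_sq hc).const_mul c
  rw [← integral_re_add_im hint]
  simp only [RCLike.re_to_complex, RCLike.im_to_complex, RCLike.I_to_complex,
    RCLike.ofReal_eq_complex_ofReal, hre, him, hodd]
  rw [integral_add (hcauchy hb.ne') (hcauchy ha.ne'), integral_univ_div_sq_add_sq ha,
    integral_univ_div_sq_add_sq hb]
  push_cast
  ring

theorem integral_sub_comp_add_mul_I_eq_zero {f : ℂ → ℂ} {β : ℝ} (hf : Differentiable ℂ f)
    (hdecay : TendstoUniformlyOn (fun x y : ℝ => f (x + y * I)) 0 (cocompact ℝ) (uIcc 0 β))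
    (hint : Integrable fun t : ℝ => f t - f (t + β * I)) :
    ∫ t : ℝ, (f t - f (t + β * I)) = 0 := by
  have hfc := hf.continuous
  set V : ℝ → ℂ := fun x => ∫ y in (0 : ℝ)..β, f (x + y * I)
  have hV {l : Filter ℝ} [l.IsCountablyGenerated] (hl : l ≤ cocompact ℝ) :
      Tendsto V l (𝓝 0) := by
    have := tendstoUniformlyOn_iff_tendstoUniformlyOnFilter.2
      ((tendstoUniformlyOn_iff_tendstoUniformlyOnFilter.1 hdecay).mono_left hl)
    simpa using this.tendsto_intervalIntegral_of_continuousOn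
      (.of_forall fun x => Continuous.continuousOn (by fun_prop))
  have hrect (R : ℝ) : ∫ x in -R..R, (f x - f (x + β * I)) = I • V (-R) - I • V R := by
    have H := integral_boundary_rect_eq_zero_of_differentiableOn f (-R) (R + β * I)
      hf.differentiableOn
    simp only [neg_re, ofReal_re, add_re, mul_re, ofReal_im, I_re, I_im, neg_im, add_im,
      mul_im, mul_zero, mul_one, zero_mul, sub_zero, zero_add, add_zero, neg_zero,
      ofReal_zero] at H
    rw [intervalIntegral.integral_sub
      ((show Continuous fun x : ℝ => f x by fun_prop).intervalIntegrable _ _)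
      ((show Continuous fun x : ℝ => f (x + β * I) by fun_prop).intervalIntegrable _ _)]
    simp only [V, ofReal_neg] at H ⊢
    linear_combination H
  refine tendsto_nhds_unique
    (intervalIntegral_tendsto_integral hint tendsto_neg_atTop_atBot tendsto_id) ?_
  simpa [id, hrect] using
    (((hV atBot_le_cocompact).comp tendsto_neg_atTop_atBot).const_smul I).sub
      ((hV atTop_le_cocompact).const_smul I)

theorem tendstoUniformlyOn_dslope_of_norm_le {W : ℂ → ℂ} {c : ℂ} {s : Set ℝ} {M : ℝ}
    (hW : ∀ x : ℝ, ∀ y ∈ s, ‖W (x + y * I)‖ ≤ M) :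
    TendstoUniformlyOn (fun x y : ℝ => dslope W c (x + y * I)) 0 (cocompact ℝ) s := by
  rw [Metric.tendstoUniformlyOn_iff]
  intro ε hε
  set K := (|M| + ‖W c‖) / ε
  filter_upwards [tendsto_norm_cocompact_atTop.eventually_gt_atTop (K + |c.re|)] with x hx y hy
  have hK : K < |x - c.re| := by
    rw [Real.norm_eq_abs] at hx
    linarith [abs_sub_abs_le_abs_sub x c.re]
  have hpos : 0 < |x - c.re| := lt_of_le_of_lt (by positivity) hK
  have hre : ((x : ℂ) + y * I - c).re = x - c.re := by simp
  have hne : (x : ℂ) + y * I ≠ c := by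
    rintro h
    rw [h, sub_self, zero_re] at hre
    rw [← hre, abs_zero] at hpos
    exact hpos.false
  rw [Pi.zero_apply, dist_zero_left, dslope_of_ne _ hne, slope_def_field, norm_div]
  calc ‖W (x + y * I) - W c‖ / ‖(x : ℂ) + y * I - c‖ ≤ (|M| + ‖W c‖) / |x - c.re| := by
        gcongr
        · exact (norm_sub_le _ _).trans
            (add_le_add ((hW x y hy).trans (le_abs_self M)) le_rfl)
        · rw [← hre]; exact abs_re_le_norm _
    _ < ε := by rwa [div_lt_iff₀ hpos, ← div_lt_iff₀' hε]

theorem integral_div_sub_sub_shift_div_sub_eq_two_pi_I_mul {W : ℂ → ℂ} {β b M : ℝ}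
    (hb : 0 < b) (hbβ : b < β) (hW : Differentiable ℂ W)
    (hWbdd : ∀ x : ℝ, ∀ y ∈ uIcc 0 β, ‖W (x + y * I)‖ ≤ M)
    (hint : Integrable fun t : ℝ => W t / (t - b * I) - W (t + β * I) / (t + β * I - b * I)) :
    ∫ t : ℝ, (W t / (t - b * I) - W (t + β * I) / (t + β * I - b * I)) =
      2 * π * I * W (b * I) := by
  set h := dslope W (b * I)
  set q : ℝ → ℂ := fun t => ((t : ℂ) - b * I)⁻¹ - ((t : ℂ) + ↑(β - b) * I)⁻¹
  have hsplit (t : ℝ) : W t / (t - b * I) - W (t + β * I) / (t + β * I - b * I) =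
      (h t - h (t + β * I)) + W (b * I) * q t := by
    have h₁ : (t : ℂ) ≠ b * I := fun h => hb.ne (by simpa using congrArg im h)
    have h₂ : (t : ℂ) + β * I ≠ b * I := fun h => hbβ.ne' (by simpa using congrArg im h)
    have h₃ : (t : ℂ) + ↑(β - b) * I = t + β * I - b * I := by push_cast; ring
    simp only [h, q, dslope_of_ne _ h₁, dslope_of_ne _ h₂, slope_def_field, h₃]
    field_simp [sub_ne_zero.2 h₁, sub_ne_zero.2 h₂]
    ring
  have hq : Integrable q := by
    simpa [q] using integrable_ofReal_sub_inv_sub_inv (z := b * I) (w := -(↑(β - b) * I))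
      (by simpa using hb.ne') (by simpa [sub_eq_zero] using hbβ.ne)
  have hH : Integrable fun t : ℝ => h t - h (t + β * I) :=
    (hint.sub (hq.const_mul (W (b * I)))).congr (.of_forall fun t => by simp [hsplit])
  have hh : Differentiable ℂ h := by
    rw [← differentiableOn_univ]
    exact (Complex.differentiableOn_dslope univ_mem).2 hW.differentiableOn
  rw [integral_congr_ae (.of_forall hsplit), integral_add hH (hq.const_mul _),
    integral_sub_comp_add_mul_I_eq_zero hh (tendstoUniformlyOn_dslope_of_norm_le hWbdd) hH,
    integral_const_mul, integral_ofReal_sub_mul_I_inv_sub_inv (sub_pos.2 hbβ) hb]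
  ring

theorem norm_cexp_neg_sq_sub_sq_le_s2 (x y b : ℝ) :
    ‖cexp (-(x + y * I) ^ 2 - b ^ 2)‖ ≤ Real.exp (y ^ 2) := by
  rw [norm_exp, Real.exp_le_exp]
  simp only [sub_re, neg_re, sq, mul_re, add_re, ofReal_re, ofReal_im, I_re, I_im, add_im,
    mul_im]
  nlinarith

theorem integrable_cexp_neg_sq_div {b y : ℝ} (hyb : y ≠ b) :
    Integrable fun t : ℝ => cexp (-(t + y * I) ^ 2 - b ^ 2) / (t + y * I - b * I) := by
  have hgauss : Integrable fun t : ℝ => cexp (-(t + y * I) ^ 2 - b ^ 2) := by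
    refine (integrable_cexp_quadratic (b := 1) (by simp) (-2 * y * I) (y ^ 2 - b ^ 2)).congr
      (.of_forall fun t => ?_)
    ring_nf
    simp only [I_sq]
    ring_nf
  refine (hgauss.div_ofReal_sub (z := b * I - y * I)
    (by simpa [sub_eq_zero] using hyb.symm)).congr (.of_forall fun t => ?_)
  ring_nf

theorem add_sub_mul_div_mul_eq_div_sub_div {u v z c d : ℂ} (hc : z - c ≠ 0)
    (hd : z + d - c ≠ 0) :
    (u * d + (u - v) * (z - c)) / ((z - c) * (z + d - c)) = u / (z - c) - v / (z + d - c) := by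
  rw [div_sub_div _ _ hc hd]
  ring_nf

/-- for `β > 0`, `b ∈ (0, β)` and `w z = exp (-z² - b²)`,
`(1/(2πi)) ∫ (w(t) iβ + (w(t) - w(t+iβ))(t - ib)) / ((t - ib)(t + iβ - ib)) dt = 1`. -/
theorem stmt_2 (β b : ℝ) (hβ : 0 < β) (hb : b ∈ Set.Ioo 0 β)
    (w : ℂ → ℂ) (hw : ∀ z : ℂ, w z = Complex.exp (-z ^ 2 - (b : ℂ) ^ 2)) :
    (1 / (2 * Real.pi * Complex.I)) *
      ∫ t : ℝ,
        (w t * (Complex.I * β) +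
          (w t - w (t + Complex.I * β)) * (t - Complex.I * b)) /
        ((t - Complex.I * b) * (t + Complex.I * β - Complex.I * b)) = 1 := by
  obtain ⟨hb0, hbβ⟩ := hb
  have hw_diff : Differentiable ℂ w := by rw [funext hw]; fun_prop
  have hw_bdd (x y : ℝ) (hy : y ∈ uIcc 0 β) : ‖w (x + y * I)‖ ≤ Real.exp (β ^ 2) := by
    rw [uIcc_of_le hβ.le] at hy
    rw [hw]
    exact (norm_cexp_neg_sq_sub_sq_le_s2 x y b).trans
      (Real.exp_le_exp.2 (sq_le_sq' (by linarith [hy.1]) hy.2))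
  have hint : Integrable fun t : ℝ =>
      w t / (t - b * I) - w (t + β * I) / (t + β * I - b * I) := by
    simp_rw [hw]
    refine Integrable.sub ?_ (integrable_cexp_neg_sq_div hbβ.ne')
    simpa using integrable_cexp_neg_sq_div (b := b) (y := 0) hb0.ne
  have hw_res : w (b * I) = 1 := by rw [hw, mul_pow, I_sq]; simp
  have hden₁ (t : ℝ) : (t : ℂ) - I * b ≠ 0 := fun h => hb0.ne' (by simpa using congrArg im h)
  have hden₂ (t : ℝ) : (t : ℂ) + I * β - I * b ≠ 0 := fun h =>
    hbβ.ne' (by simpa [sub_eq_zero] using congrArg im h)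
  simp_rw [add_sub_mul_div_mul_eq_div_sub_div (hden₁ _) (hden₂ _), mul_comm I]
  rw [integral_div_sub_sub_shift_div_sub_eq_two_pi_I_mul hb0 hbβ hw_diff hw_bdd hint, hw_res,
    mul_one, one_div, inv_mul_cancel₀ (by simp [Real.pi_ne_zero])]
end

section
/- Let g : ℝ → ℝ be a bounded continuous function with |g(t)| ≤ K for all t, and suppose |g(t)| ≤ M(e^{v|t|} − 1)e^{-μl} for |t| ≤ μl/(2v), where K, M, v, μ, l > 0. Then ∫_{-∞}^{∞} (|g(t)|/max(|t|, η))·e^{-t²} dt ≤ C(M e^{-μl/2} + K e^{-(μl/(2v))²}/(μl/(2v))) for any fixed η ∈ (0,1], where C depends only on μ, v, η. -/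
/-!
Split the line at `|t| = a := μl/(2v)`. For `|t| ≤ a` the Lieb–Robinson bound gives
`|g t| ≤ M e^{va} e^{-μl} = M e^{-μl/2}`, and `∫ e^{-t²} = √π ≤ 2`; for `|t| > a` we only use
`|g| ≤ K` and the Gaussian tail `∫_a^∞ e^{-t²} ≤ ∫_a^∞ e^{-at} = e^{-a²}/a`. Throughout,
`1 / max |t| η ≤ 1 / η`, so `C = 2 / η` works.
-/

open MeasureTheory Set Real

lemma integrable_exp_neg_sq : Integrable fun t : ℝ => exp (-t ^ 2) := by
  simpa using integrable_exp_neg_mul_sq (b := 1) one_pos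

lemma integral_exp_neg_sq_le_two : ∫ t : ℝ, exp (-t ^ 2) ≤ 2 := by
  have hπ : √π ≤ √(2 ^ 2) := sqrt_le_sqrt (by linarith [pi_le_four])
  simpa [sqrt_sq] using (integral_gaussian 1).trans_le (by simpa using hπ)

lemma setIntegral_Ioi_exp_neg_sq_le {a : ℝ} (ha : 0 < a) :
    ∫ t in Ioi a, exp (-t ^ 2) ≤ exp (-a ^ 2) / a := by
  have hna : -a < 0 := neg_lt_zero.2 ha
  calc ∫ t in Ioi a, exp (-t ^ 2)
      ≤ ∫ t in Ioi a, exp (-a * t) :=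
        setIntegral_mono_on integrable_exp_neg_sq.integrableOn (integrableOn_exp_mul_Ioi hna a)
          measurableSet_Ioi fun t (ht : a < t) => exp_le_exp.2 (by nlinarith)
    _ = exp (-a ^ 2) / a := by
        rw [integral_exp_mul_Ioi hna, neg_div_neg_eq]
        ring_nf

lemma setIntegral_lt_abs_comp_abs (f : ℝ → ℝ) {a : ℝ} (ha : 0 ≤ a) :
    ∫ t in {t : ℝ | a < |t|}, f |t| = 2 * ∫ t in Ioi a, f t := by
  have hS : MeasurableSet {t : ℝ | a < |t|} := measurableSet_lt measurable_const measurable_abs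
  have hind : {t : ℝ | a < |t|}.indicator (fun t => f |t|) = fun t => (Ioi a).indicator f |t| := by
    ext t
    simp [indicator]
  rw [← integral_indicator hS, hind, integral_comp_abs, setIntegral_indicator measurableSet_Ioi,
    Ioi_inter_Ioi, sup_eq_right.2 ha]

lemma integral_mul_exp_neg_sq_le {F : ℝ → ℝ} {a B K : ℝ} (ha : 0 < a) (hF0 : ∀ t, 0 ≤ F t)
    (hFK : ∀ t, F t ≤ K) (hFB : ∀ t, |t| ≤ a → F t ≤ B) :
    ∫ t, F t * exp (-t ^ 2) ≤ 2 * B + 2 * K * exp (-a ^ 2) / a := by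
  set S := {t : ℝ | a < |t|}
  have hS : MeasurableSet S := measurableSet_lt measurable_const measurable_abs
  have hB : 0 ≤ B := (hF0 0).trans (hFB 0 (by simpa using ha.le))
  have hK : 0 ≤ K := (hF0 0).trans (hFK 0)
  have hpt : ∀ t, F t * exp (-t ^ 2) ≤
      B * exp (-t ^ 2) + K * S.indicator (fun t => exp (-t ^ 2)) t := by
    intro t
    have he := exp_pos (-t ^ 2)
    by_cases ht : t ∈ S
    · rw [indicator_of_mem ht]
      nlinarith [hFK t]
    · rw [indicator_of_notMem ht]
      nlinarith [hFB t (not_lt.1 ht)]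
  have htail : ∫ t in S, exp (-t ^ 2) = 2 * ∫ t in Ioi a, exp (-t ^ 2) := by
    have h := setIntegral_lt_abs_comp_abs (fun t => exp (-t ^ 2)) ha.le
    simp only [sq_abs] at h
    exact h
  calc ∫ t, F t * exp (-t ^ 2)
      ≤ ∫ t, (B * exp (-t ^ 2) + K * S.indicator (fun t => exp (-t ^ 2)) t) :=
        integral_mono_of_nonneg (ae_of_all _ fun t => mul_nonneg (hF0 t) (exp_pos _).le)
          ((integrable_exp_neg_sq.const_mul B).add
            ((integrable_exp_neg_sq.indicator hS).const_mul K))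
          (ae_of_all _ hpt)
    _ = B * (∫ t, exp (-t ^ 2)) + K * (2 * ∫ t in Ioi a, exp (-t ^ 2)) := by
        rw [integral_add (integrable_exp_neg_sq.const_mul B)
            ((integrable_exp_neg_sq.indicator hS).const_mul K),
          integral_const_mul, integral_const_mul, integral_indicator hS, htail]
    _ ≤ B * 2 + K * (2 * (exp (-a ^ 2) / a)) := by
        gcongr
        exacts [integral_exp_neg_sq_le_two, setIntegral_Ioi_exp_neg_sq_le ha]
    _ = 2 * B + 2 * K * exp (-a ^ 2) / a := by ring

lemma mul_exp_sub_one_mul_exp_le {M μ v l t : ℝ} (hM : 0 ≤ M) (hv : 0 < v)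
    (ht : |t| ≤ μ * l / (2 * v)) :
    M * (exp (v * |t|) - 1) * exp (-μ * l) ≤ M * exp (-μ * l / 2) := by
  have hvt : v * |t| ≤ μ * l / 2 :=
    (mul_le_mul_of_nonneg_left ht hv.le).trans_eq (by field_simp)
  calc M * (exp (v * |t|) - 1) * exp (-μ * l)
      ≤ M * exp (μ * l / 2) * exp (-μ * l) := by
        gcongr
        linarith [exp_le_exp.2 hvt]
    _ = M * exp (-μ * l / 2) := by
        rw [mul_assoc, ← exp_add]
        ring_nf

theorem stmt_13_general (μ v η : ℝ) (hμ : 0 < μ) (hv : 0 < v) (hη : 0 < η) :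
    ∃ C : ℝ, ∀ (K M l : ℝ) (g : ℝ → ℝ), 0 < K → 0 < M → 0 < l →
      Continuous g → (∀ t : ℝ, |g t| ≤ K) →
      (∀ t : ℝ, |t| ≤ μ * l / (2 * v) →
        |g t| ≤ M * (Real.exp (v * |t|) - 1) * Real.exp (-μ * l)) →
      (∫ t : ℝ, (|g t| / max |t| η) * Real.exp (-t ^ 2)) ≤
        C * (M * Real.exp (-μ * l / 2) +
          K * Real.exp (-(μ * l / (2 * v)) ^ 2) / (μ * l / (2 * v))) := by
  refine ⟨2 / η, fun K M l g _ hM hl _ hgK hgM => ?_⟩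
  have ha : 0 < μ * l / (2 * v) := by positivity
  have hdiv : ∀ {t c : ℝ}, |g t| ≤ c → |g t| / max |t| η ≤ c / η := fun h =>
    div_le_div₀ ((abs_nonneg _).trans h) h hη (le_max_right _ _)
  calc ∫ t, |g t| / max |t| η * exp (-t ^ 2)
      ≤ 2 * (M * exp (-μ * l / 2) / η) +
          2 * (K / η) * exp (-(μ * l / (2 * v)) ^ 2) / (μ * l / (2 * v)) :=
        integral_mul_exp_neg_sq_le ha (fun t => by positivity) (fun t => hdiv (hgK t))
          fun t ht => hdiv ((hgM t ht).trans (mul_exp_sub_one_mul_exp_le hM.le hv ht))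
    _ = _ := by ring

/-- abstract estimate for the first term: if `|g| ≤ K` everywhere and
`|g(t)| ≤ M(e^{v|t|}-1)e^{-μl}` for `|t| ≤ μl/(2v)`, then for any `η ∈ (0,1]`,
`∫ (|g(t)|/max(|t|,η)) e^{-t²} dt ≤ C (M e^{-μl/2} + K e^{-(μl/(2v))²}/(μl/(2v)))`,
with `C` depending only on `μ, v, η`. -/
theorem stmt_13 (μ v η : ℝ) (hμ : 0 < μ) (hv : 0 < v) (hη : 0 < η) (hη1 : η ≤ 1) :
    ∃ C : ℝ, ∀ (K M l : ℝ) (g : ℝ → ℝ), 0 < K → 0 < M → 0 < l →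
      Continuous g → (∀ t : ℝ, |g t| ≤ K) →
      (∀ t : ℝ, |t| ≤ μ * l / (2 * v) →
        |g t| ≤ M * (Real.exp (v * |t|) - 1) * Real.exp (-μ * l)) →
      (∫ t : ℝ, (|g t| / max |t| η) * Real.exp (-t ^ 2)) ≤
        C * (M * Real.exp (-μ * l / 2) +
          K * Real.exp (-(μ * l / (2 * v)) ^ 2) / (μ * l / (2 * v))) :=
  stmt_13_general μ v η hμ hv hη
end

section
/- Norm bound on the time derivative of the localized evolution: under the interaction condition Σ_{Z ∋ x}‖Φ(Z)‖|Z|e^{μ diam Z} ≤ v/2, polynomial growth of balls, the Lieb-Robinson bound ‖[Φ(Z), τ_t(B)]‖ ≤ 2‖Φ(Z)‖‖B‖|Z|e^{-μ d(Z,Y)}(e^{v|t|}−1), and differentiability of t ↦ τ_t(B) with derivative δ(τ_t(B)) = Σ_Z [Φ(Z), τ_t(B)], the derivative of the localized operator B^r(t) = T_{B_r(Y)}(τ_t(B)) satisfies ‖(d/dt) B^r(t)‖ ≤ C(μ, v, ε)·‖B‖·|Y| for all |t| < ε, where C(μ, v, ε) is independent of B, Y, and r. -/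
section Aux

lemma cover_sum' {α β : Type*} (w : Finset α) (s : Finset β)
    (R : α → β → Prop) [∀ x, DecidablePred (fun Z => R Z x)] (f : α → ℝ)
    (hf : ∀ Z ∈ w, 0 ≤ f Z) (hcov : ∀ Z ∈ w, ∃ x ∈ s, R Z x) :
    ∑ Z ∈ w, f Z ≤ ∑ x ∈ s, ∑ Z ∈ w.filter (fun Z => R Z x), f Z := by
  classical
  calc ∑ Z ∈ w, f Z ≤ ∑ Z ∈ w, ∑ x ∈ s.filter (fun x => R Z x), f Z := by
        refine Finset.sum_le_sum fun Z hZ => ?_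
        rw [Finset.sum_const, nsmul_eq_mul]
        obtain ⟨x, hx, hR⟩ := hcov Z hZ
        have hc : (1 : ℝ) ≤ ((s.filter (fun x => R Z x)).card : ℝ) := by
          exact_mod_cast Finset.card_pos.2 ⟨x, Finset.mem_filter.2 ⟨hx, hR⟩⟩
        nlinarith [hf Z hZ]
    _ = ∑ x ∈ s, ∑ Z ∈ w.filter (fun Z => R Z x), f Z := by
        simp_rw [Finset.sum_filter]
        exact Finset.sum_comm

lemma S_summable' (μ dG : ℝ) (hμ : 0 < μ) :
    Summable (fun n : ℕ => (1 + (n : ℝ)) ^ dG * Real.exp (-μ * ((n : ℝ) - 1))) := by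
  set m := ⌈dG⌉₊ with hm
  set q := Real.exp (-μ) with hqdef
  have hq0 : 0 < q := Real.exp_pos _
  have hq1 : q < 1 := Real.exp_lt_one_iff.2 (by linarith)
  have base : Summable (fun n : ℕ => (n : ℝ) ^ m * q ^ n) :=
    summable_pow_mul_geometric_of_norm_lt_one m (by rwa [Real.norm_eq_abs, abs_of_pos hq0])
  have shift : Summable (fun n : ℕ => ((n : ℝ) + 1) ^ m * q ^ (n + 1)) := by
    have := (summable_nat_add_iff 1).2 base
    simpa using this
  refine Summable.of_nonneg_of_le (fun n => by positivity) (fun n => ?_)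
    (shift.mul_right (Real.exp μ * Real.exp μ))
  have e1 : q ^ (n + 1) = Real.exp (-(((n : ℝ) + 1) * μ)) := by
    rw [hqdef, ← Real.exp_nat_mul]
    congr 1
    push_cast
    ring
  have h1 : (1 + (n : ℝ)) ^ dG ≤ ((n : ℝ) + 1) ^ m := by
    rw [add_comm 1 (n : ℝ), ← Real.rpow_natCast ((n : ℝ) + 1) m]
    exact Real.rpow_le_rpow_of_exponent_le (by simp) (Nat.le_ceil dG)
  have h2 : Real.exp (-μ * ((n : ℝ) - 1)) = q ^ (n + 1) * (Real.exp μ * Real.exp μ) := by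
    rw [e1, ← Real.exp_add, ← Real.exp_add]
    congr 1
    ring
  calc (1 + (n : ℝ)) ^ dG * Real.exp (-μ * ((n : ℝ) - 1))
      ≤ ((n : ℝ) + 1) ^ m * Real.exp (-μ * ((n : ℝ) - 1)) := by
        exact mul_le_mul_of_nonneg_right h1 (Real.exp_nonneg _)
    _ = ((n : ℝ) + 1) ^ m * q ^ (n + 1) * (Real.exp μ * Real.exp μ) := by
        rw [h2]; ring

end Aux


set_option maxHeartbeats 2000000 in
/-- norm bound on the time derivative of the localized evolution
`B^r(t) = T_{B_r(Y)}(τ_t B)`: under the short-range interaction condition, polynomial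
growth of distance shells, the Lieb-Robinson commutator bound, and differentiability of
`t ↦ τ_t B` with derivative `Σ_Z [Φ(Z), τ_t B]` (commuting with the contraction `T`),
one has `‖(d/dt) B^r(t)‖ ≤ C(μ,v,ε)‖B‖|Y|` for `|t| < ε`, with `C` independent of
`B`, `Y` and `r`. -/
theorem stmt_16 {Γ A : Type*} [MetricSpace Γ] [NormedRing A]
    [NormedAlgebra ℂ A] [CompleteSpace A]
    (μ v ε aG dG : ℝ) (hμ : 0 < μ) (hv : 0 < v) (hε : 0 < ε)
    (haG : 0 < aG) (hdG : 0 < dG) :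
    ∃ C : ℝ, ∀ (Φ : Finset Γ → A) (τ : ℝ → A → A) (Y : Finset Γ) (b : A)
      (T : Set Γ → A →ₗ[ℂ] A) (r : ℝ), 0 < r →
      (∀ (t : ℝ) (x : A), ‖τ t x‖ = ‖x‖) →
      -- short-range interaction condition
      (∀ x : Γ, Summable fun Z : {Z : Finset Γ // x ∈ Z} =>
        ‖Φ Z‖ * (Z : Finset Γ).card *
          Real.exp (μ * Metric.diam ((Z : Finset Γ) : Set Γ))) →
      (∀ x : Γ, (∑' Z : {Z : Finset Γ // x ∈ Z},
        ‖Φ Z‖ * (Z : Finset Γ).card *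
          Real.exp (μ * Metric.diam ((Z : Finset Γ) : Set Γ))) ≤ v / 2) →
      -- Lieb-Robinson commutator bound for interaction terms away from Y
      (∀ (Z : Finset Γ) (ρ : ℝ), 0 ≤ ρ → (∀ z ∈ Z, ∀ y ∈ Y, ρ ≤ dist z y) →
        ∀ t : ℝ, ‖Φ Z * τ t b - τ t b * Φ Z‖ ≤
          2 * ‖Φ Z‖ * ‖b‖ * Z.card * Real.exp (-μ * ρ) * (Real.exp (v * |t|) - 1)) →
      -- polynomial growth of the distance shells around Y, dominated by |Y|
      (∀ n : ℕ,
        ({z : Γ | (n : ℝ) - 1 < Metric.infDist z (Y : Set Γ) ∧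
            Metric.infDist z (Y : Set Γ) ≤ (n : ℝ)}).Finite ∧
        (({z : Γ | (n : ℝ) - 1 < Metric.infDist z (Y : Set Γ) ∧
            Metric.infDist z (Y : Set Γ) ≤ (n : ℝ)}).ncard : ℝ) ≤
          aG * Y.card * (1 + (n : ℝ)) ^ dG) →
      -- T is a linear contraction
      (∀ (S : Set Γ) (x : A), ‖T S x‖ ≤ ‖x‖) →
      -- differentiability of the localized evolution, with derivative
      -- T_S (Σ_Z [Φ(Z), τ_t B]) (T commutes with differentiation in t)
      (∀ (S : Set Γ) (t : ℝ),
        HasDerivAt (fun s : ℝ => T S (τ s b))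
          (T S (∑' Z : Finset Γ, (Φ Z * τ t b - τ t b * Φ Z))) t) →
      ∀ t : ℝ, |t| < ε →
        ‖deriv (fun s : ℝ => T {y : Γ | ∃ x ∈ Y, dist y x < r} (τ s b)) t‖ ≤
          C * ‖b‖ * Y.card := by
  classical
  set S : ℝ := ∑' n : ℕ, (1 + (n : ℝ)) ^ dG * Real.exp (-μ * ((n : ℝ) - 1)) with hSdef
  have hSsum := S_summable' μ dG hμ
  have hS0 : 0 ≤ S := tsum_nonneg (fun n => by positivity)
  set E : ℝ := Real.exp (v * ε) - 1 with hEdef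
  have hE0 : 0 ≤ E := by
    have : (1:ℝ) ≤ Real.exp (v * ε) := Real.one_le_exp (by positivity)
    simp only [hEdef]; linarith
  refine ⟨v + v * E * aG * S, ?_⟩
  intro Φ τ Y b T r hr hτ hsum hsum_le hLR hshell hT hderiv t ht
  set C : ℝ := v + v * E * aG * S with hCdef
  have hC0 : 0 ≤ C := by positivity
  -- rewrite the derivative
  rw [(hderiv {y : Γ | ∃ x ∈ Y, dist y x < r} t).deriv]
  refine (hT _ _).trans ?_
  -- key summation estimate
  have key : ∀ (x : Γ) (w : Finset (Finset Γ)), (∀ Z ∈ w, x ∈ Z) →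
      ∑ Z ∈ w, ‖Φ Z‖ * (Z.card : ℝ) ≤ v / 2 := by
    intro x w hw
    have h1 : ∑ Z ∈ w, ‖Φ Z‖ * (Z.card : ℝ) ≤
        ∑ Z ∈ w, ‖Φ Z‖ * (Z.card : ℝ) * Real.exp (μ * Metric.diam ((Z : Finset Γ) : Set Γ)) := by
      refine Finset.sum_le_sum fun Z _ => ?_
      nth_rewrite 1 [← mul_one (‖Φ Z‖ * (Z.card : ℝ))]
      refine mul_le_mul_of_nonneg_left ?_ (by positivity)
      exact Real.one_le_exp (mul_nonneg hμ.le Metric.diam_nonneg)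
    refine h1.trans ?_
    rw [← Finset.sum_subtype_of_mem
      (fun Z => ‖Φ Z‖ * (Z.card : ℝ) * Real.exp (μ * Metric.diam ((Z : Finset Γ) : Set Γ))) hw]
    exact (Summable.sum_le_tsum _ (fun Z _ => by positivity) (hsum x)).trans (hsum_le x)
  -- the minimal distance of a set to Y and its integer shell index
  set ρ : Finset Γ → ℝ := fun Z =>
    if h : Z.Nonempty then Z.inf' h (fun z => Metric.infDist z (Y : Set Γ)) else 0 with hρdef
  have hρ0 : ∀ Z, 0 ≤ ρ Z := by
    intro Z
    simp only [hρdef]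
    split
    · exact Finset.le_inf' _ _ (fun z _ => Metric.infDist_nonneg)
    · exact le_refl 0
  have hρle : ∀ (Z : Finset Γ) (z : Γ), z ∈ Z → ρ Z ≤ Metric.infDist z (Y : Set Γ) := by
    intro Z z hz
    have hne : Z.Nonempty := ⟨z, hz⟩
    simp only [hρdef, dif_pos hne]
    exact Finset.inf'_le _ hz
  set nn : Finset Γ → ℕ := fun Z => ⌈ρ Z⌉₊ with hnndef
  -- the dominating function
  set g : Finset Γ → ℝ := fun Z =>
    if (Z ∩ Y).Nonempty then 2 * ‖Φ Z‖ * ‖b‖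
    else 2 * ‖Φ Z‖ * ‖b‖ * (Z.card : ℝ) * Real.exp (-μ * ((nn Z : ℝ) - 1)) * E with hgdef
  have hg0 : ∀ Z, 0 ≤ g Z := by
    intro Z
    simp only [hgdef]
    split
    · positivity
    · positivity
  have hbound : ∀ Z : Finset Γ, ‖Φ Z * τ t b - τ t b * Φ Z‖ ≤ g Z := by
    intro Z
    simp only [hgdef]
    split
    · calc ‖Φ Z * τ t b - τ t b * Φ Z‖ ≤ ‖Φ Z * τ t b‖ + ‖τ t b * Φ Z‖ := norm_sub_le _ _
        _ ≤ ‖Φ Z‖ * ‖τ t b‖ + ‖τ t b‖ * ‖Φ Z‖ := add_le_add (norm_mul_le _ _) (norm_mul_le _ _)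
        _ = 2 * ‖Φ Z‖ * ‖b‖ := by rw [hτ t b]; ring
    · refine (hLR Z (ρ Z) (hρ0 Z) ?_ t).trans ?_
      · intro z hz y hy
        exact (hρle Z z hz).trans (Metric.infDist_le_dist_of_mem (by exact_mod_cast hy))
      · have hexp : Real.exp (-μ * ρ Z) ≤ Real.exp (-μ * ((nn Z : ℝ) - 1)) := by
          apply Real.exp_le_exp.2
          have : ((nn Z : ℝ)) - 1 ≤ ρ Z := by
            have := Nat.ceil_lt_add_one (hρ0 Z)
            simp only [hnndef]
            linarith
          nlinarith
        have hEt : Real.exp (v * |t|) - 1 ≤ E := by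
          simp only [hEdef]
          have : Real.exp (v * |t|) ≤ Real.exp (v * ε) :=
            Real.exp_le_exp.2 (mul_le_mul_of_nonneg_left ht.le hv.le)
          linarith
        have hEt0 : 0 ≤ Real.exp (v * |t|) - 1 := by
          have : (1:ℝ) ≤ Real.exp (v * |t|) := Real.one_le_exp (by positivity)
          linarith
        calc 2 * ‖Φ Z‖ * ‖b‖ * (Z.card : ℝ) * Real.exp (-μ * ρ Z) * (Real.exp (v * |t|) - 1)
            ≤ 2 * ‖Φ Z‖ * ‖b‖ * (Z.card : ℝ) * Real.exp (-μ * ((nn Z : ℝ) - 1)) *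
              (Real.exp (v * |t|) - 1) := by
              refine mul_le_mul_of_nonneg_right (mul_le_mul_of_nonneg_left hexp (by positivity))
                hEt0
          _ ≤ 2 * ‖Φ Z‖ * ‖b‖ * (Z.card : ℝ) * Real.exp (-μ * ((nn Z : ℝ) - 1)) * E := by
              refine mul_le_mul_of_nonneg_left hEt (by positivity)
  -- bound on all partial sums of g
  have hpartial : ∀ u : Finset (Finset Γ), ∑ Z ∈ u, g Z ≤ C * ‖b‖ * Y.card := by
    intro u
    rw [← Finset.sum_filter_add_sum_filter_not u (fun Z => (Z ∩ Y).Nonempty)]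
    have partA : ∑ Z ∈ u.filter (fun Z => (Z ∩ Y).Nonempty), g Z ≤ v * ‖b‖ * Y.card := by
      set u1 := u.filter (fun Z => (Z ∩ Y).Nonempty) with hu1
      have hcov : ∀ Z ∈ u1, ∃ x ∈ Y, x ∈ Z := by
        intro Z hZ
        obtain ⟨x, hx⟩ := (Finset.mem_filter.1 hZ).2
        exact ⟨x, (Finset.mem_inter.1 hx).2, (Finset.mem_inter.1 hx).1⟩
      refine (cover_sum' u1 Y (fun Z x => x ∈ Z) g (fun Z _ => hg0 Z) hcov).trans ?_
      have inner : ∀ x ∈ Y, ∑ Z ∈ u1.filter (fun Z => x ∈ Z), g Z ≤ v * ‖b‖ := by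
        intro x hx
        have h1 : ∀ Z ∈ u1.filter (fun Z => x ∈ Z), g Z ≤ 2 * ‖b‖ * (‖Φ Z‖ * (Z.card : ℝ)) := by
          intro Z hZ
          have hZ1 := Finset.mem_filter.1 hZ
          have hmem : x ∈ Z := hZ1.2
          have hne : (Z ∩ Y).Nonempty := (Finset.mem_filter.1 hZ1.1).2
          have hcard : (1 : ℝ) ≤ (Z.card : ℝ) := by
            exact_mod_cast Finset.card_pos.2 ⟨x, hmem⟩
          simp only [hgdef, if_pos hne]
          nlinarith [mul_nonneg (mul_nonneg (norm_nonneg (Φ Z)) (norm_nonneg b)) (sub_nonneg.2 hcard)]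
        calc ∑ Z ∈ u1.filter (fun Z => x ∈ Z), g Z
            ≤ ∑ Z ∈ u1.filter (fun Z => x ∈ Z), 2 * ‖b‖ * (‖Φ Z‖ * (Z.card : ℝ)) :=
              Finset.sum_le_sum h1
          _ = 2 * ‖b‖ * ∑ Z ∈ u1.filter (fun Z => x ∈ Z), ‖Φ Z‖ * (Z.card : ℝ) := by
              rw [Finset.mul_sum]
          _ ≤ 2 * ‖b‖ * (v / 2) := by
              refine mul_le_mul_of_nonneg_left ?_ (by positivity)
              exact key x _ (fun Z hZ => (Finset.mem_filter.1 hZ).2)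
          _ = v * ‖b‖ := by ring
      calc ∑ x ∈ Y, ∑ Z ∈ u1.filter (fun Z => x ∈ Z), g Z
          ≤ ∑ x ∈ Y, v * ‖b‖ := Finset.sum_le_sum inner
        _ = v * ‖b‖ * Y.card := by
            rw [Finset.sum_const, nsmul_eq_mul]; ring
    have partB : ∑ Z ∈ u.filter (fun Z => ¬(Z ∩ Y).Nonempty), g Z ≤
        v * E * aG * S * ‖b‖ * Y.card := by
      set u2 := u.filter (fun Z => ¬(Z ∩ Y).Nonempty) with hu2
      set u2' := u2.filter Finset.Nonempty with hu2'
      have hzero : ∑ Z ∈ u2, g Z = ∑ Z ∈ u2', g Z := by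
        refine (Finset.sum_subset (Finset.filter_subset _ _) ?_).symm
        intro Z hZ hZ'
        have hZe : Z = ∅ := by
          by_contra hne
          exact hZ' (Finset.mem_filter.2 ⟨hZ, Finset.nonempty_iff_ne_empty.2 hne⟩)
        subst hZe
        simp only [hgdef]
        rw [if_neg (by simp)]
        simp
      rw [hzero]
      set N := u2'.sup nn with hN
      rw [← Finset.sum_fiberwise_of_maps_to
        (fun Z hZ => Finset.mem_range.2 (Nat.lt_succ_of_le (Finset.le_sup hZ))) g]
      have perk : ∀ k ∈ Finset.range (N + 1),
          ∑ Z ∈ u2'.filter (fun Z => nn Z = k), g Z ≤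
            (aG * Y.card * (1 + (k : ℝ)) ^ dG) * (v * ‖b‖ * E * Real.exp (-μ * ((k : ℝ) - 1))) := by
        intro k _
        set wk := u2'.filter (fun Z => nn Z = k) with hwk
        set shellF := (hshell k).1.toFinset with hshellF
        have hcov : ∀ Z ∈ wk, ∃ x ∈ shellF, x ∈ Z := by
          intro Z hZ
          have hZk := Finset.mem_filter.1 hZ
          have hZne : Z.Nonempty := (Finset.mem_filter.1 hZk.1).2
          obtain ⟨x, hxZ, hval⟩ := Finset.exists_mem_eq_inf' hZne
            (fun z => Metric.infDist z (Y : Set Γ))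
          have hρval : ρ Z = Metric.infDist x (Y : Set Γ) := by
            simp only [hρdef, dif_pos hZne]; exact hval
          refine ⟨x, ?_, hxZ⟩
          rw [hshellF, Set.Finite.mem_toFinset]
          constructor
          · rw [← hρval]
            have h1 := Nat.ceil_lt_add_one (hρ0 Z)
            have : (nn Z : ℝ) < ρ Z + 1 := by simpa [hnndef] using h1
            rw [← hZk.2]
            linarith
          · rw [← hρval, ← hZk.2]
            exact Nat.le_ceil _
        refine (cover_sum' wk shellF (fun Z x => x ∈ Z) g (fun Z _ => hg0 Z) hcov).trans ?_
        have inner : ∀ x ∈ shellF, ∑ Z ∈ wk.filter (fun Z => x ∈ Z), g Z ≤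
            v * ‖b‖ * E * Real.exp (-μ * ((k : ℝ) - 1)) := by
          intro x _
          have h1 : ∀ Z ∈ wk.filter (fun Z => x ∈ Z),
              g Z ≤ (2 * ‖b‖ * E * Real.exp (-μ * ((k : ℝ) - 1))) * (‖Φ Z‖ * (Z.card : ℝ)) := by
            intro Z hZ
            have hZ1 := Finset.mem_filter.1 hZ
            have hZk := Finset.mem_filter.1 hZ1.1
            have hnotY : ¬(Z ∩ Y).Nonempty := (Finset.mem_filter.1 (Finset.mem_filter.1 hZk.1).1).2
            simp only [hgdef, if_neg hnotY]
            rw [hZk.2]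
            exact le_of_eq (by ring)
          calc ∑ Z ∈ wk.filter (fun Z => x ∈ Z), g Z
              ≤ ∑ Z ∈ wk.filter (fun Z => x ∈ Z),
                  (2 * ‖b‖ * E * Real.exp (-μ * ((k : ℝ) - 1))) * (‖Φ Z‖ * (Z.card : ℝ)) :=
                Finset.sum_le_sum h1
            _ = (2 * ‖b‖ * E * Real.exp (-μ * ((k : ℝ) - 1))) *
                  ∑ Z ∈ wk.filter (fun Z => x ∈ Z), ‖Φ Z‖ * (Z.card : ℝ) := by
                rw [Finset.mul_sum]
            _ ≤ (2 * ‖b‖ * E * Real.exp (-μ * ((k : ℝ) - 1))) * (v / 2) := by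
                refine mul_le_mul_of_nonneg_left ?_ (by positivity)
                exact key x _ (fun Z hZ => (Finset.mem_filter.1 hZ).2)
            _ = v * ‖b‖ * E * Real.exp (-μ * ((k : ℝ) - 1)) := by ring
        calc ∑ x ∈ shellF, ∑ Z ∈ wk.filter (fun Z => x ∈ Z), g Z
            ≤ ∑ x ∈ shellF, v * ‖b‖ * E * Real.exp (-μ * ((k : ℝ) - 1)) :=
              Finset.sum_le_sum inner
          _ = (shellF.card : ℝ) * (v * ‖b‖ * E * Real.exp (-μ * ((k : ℝ) - 1))) := by
              rw [Finset.sum_const, nsmul_eq_mul]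
          _ ≤ (aG * Y.card * (1 + (k : ℝ)) ^ dG) * (v * ‖b‖ * E * Real.exp (-μ * ((k : ℝ) - 1))) := by
              refine mul_le_mul_of_nonneg_right ?_ (by positivity)
              have := (hshell k).2
              rwa [Set.ncard_eq_toFinset_card _ (hshell k).1] at this
      calc ∑ k ∈ Finset.range (N + 1), ∑ Z ∈ u2'.filter (fun Z => nn Z = k), g Z
          ≤ ∑ k ∈ Finset.range (N + 1),
              (aG * Y.card * (1 + (k : ℝ)) ^ dG) * (v * ‖b‖ * E * Real.exp (-μ * ((k : ℝ) - 1))) :=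
            Finset.sum_le_sum perk
        _ = (aG * Y.card * v * ‖b‖ * E) *
              ∑ k ∈ Finset.range (N + 1), (1 + (k : ℝ)) ^ dG * Real.exp (-μ * ((k : ℝ) - 1)) := by
            rw [Finset.mul_sum]
            exact Finset.sum_congr rfl (fun k _ => by ring)
        _ ≤ (aG * Y.card * v * ‖b‖ * E) * S := by
            refine mul_le_mul_of_nonneg_left ?_ (by positivity)
            exact Summable.sum_le_tsum _ (fun n _ => by positivity) hSsum
        _ = v * E * aG * S * ‖b‖ * Y.card := by ring
    calc ∑ Z ∈ u.filter (fun Z => (Z ∩ Y).Nonempty), g Z +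
          ∑ Z ∈ u.filter (fun Z => ¬(Z ∩ Y).Nonempty), g Z
        ≤ v * ‖b‖ * Y.card + v * E * aG * S * ‖b‖ * Y.card := add_le_add partA partB
      _ = C * ‖b‖ * Y.card := by rw [hCdef]; ring
  have hgsum : Summable g := summable_of_sum_le (fun Z => hg0 Z) hpartial
  calc ‖∑' Z : Finset Γ, (Φ Z * τ t b - τ t b * Φ Z)‖ ≤ ∑' Z, g Z :=
        tsum_of_norm_bounded hgsum.hasSum hbound
    _ ≤ C * ‖b‖ * Y.card := Summable.tsum_le_of_sum_le hgsum hpartial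
end
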